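/- arXiv:1206.0585 — 2 statements merged into one kernel-verified Lean document; each statement's English description precedes it below -/
import Mathlib

section
/- Let F : S^ℤ → S^ℤ be a cellular automaton (shift-commuting and continuous) that is not surjective. Then F is not preinjective: there exist distinct points x ≠ y agreeing outside a finite set of coordinates with F(x) = F(y). -/
/-!
A continuous shift-commuting map has a local rule of some radius `r`, and a non-surjective one
has a forbidden word `w` of some length `n`: no image `F x` contains `w`. If `F` were
preinjective, then the `q ^ L` patterns on `[0, L)`, padded by a constant symbol, would have
images that differ already on `[-r, L + r)`. Cutting this window of length `L + 2 r = k n` into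
`k` blocks of length `n` that all avoid `w` gives `q ^ (k n - 2 r) ≤ (q ^ n - 1) ^ k`, which
fails for large `k`.
-/

open Filter Topology Function

section Topology

variable {ι S T : Type*} [TopologicalSpace S]

theorem exists_finset_cylinder_subset_of_mem_nhds {U : Set (ι → S)} {z : ι → S}
    (hU : U ∈ 𝓝 z) : ∃ I : Finset ι, ∀ y, (∀ i ∈ I, y i = z i) → y ∈ U := by
  rw [nhds_pi, Filter.mem_pi'] at hU
  obtain ⟨I, t, ht, hsub⟩ := hU
  exact ⟨I, fun y hy => hsub fun i hi => hy i hi ▸ mem_of_mem_nhds (ht i)⟩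

theorem Continuous.exists_finset_eq_of_eqOn [DiscreteTopology S] [CompactSpace S]
    [TopologicalSpace T] [DiscreteTopology T] {g : (ι → S) → T} (hg : Continuous g) :
    ∃ I : Finset ι, ∀ x y, (∀ i ∈ I, x i = y i) → g x = g y := by
  set V : Finset ι → Set (ι → S) := fun I => {x | ∀ y, (∀ i ∈ I, y i = x i) → g y = g x}
  have hopen : ∀ I, IsOpen (V I) := fun I => isOpen_iff_mem_nhds.2 fun x hx =>
    mem_of_superset (set_pi_mem_nhds (s := fun i => {x i}) I.finite_toSet
      fun i _ => mem_nhds_discrete.2 rfl)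
      fun y hy y' hy' => (hx y' fun i hi => (hy' i hi).trans (hy i hi)).trans (hx y hy).symm
  have hcover : Set.univ ⊆ ⋃ I, V I := fun x _ => by
    obtain ⟨I, hI⟩ := exists_finset_cylinder_subset_of_mem_nhds
      (hg.continuousAt.preimage_mem_nhds (mem_nhds_discrete.2 (Set.mem_singleton (g x))))
    exact Set.mem_iUnion.2 ⟨I, hI⟩
  have hdir : Directed (· ⊆ ·) V := Monotone.directed_le fun I J hIJ x hx y hy =>
    hx y fun i hi => hy i (Finset.mem_of_subset hIJ hi)
  obtain ⟨I, hI⟩ := isCompact_univ.elim_directed_cover V hopen hcover hdir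
  exact ⟨I, fun x y hxy => hI (Set.mem_univ y) x hxy⟩

end Topology

def Preinjective {ι S Y : Type*} (F : (ι → S) → Y) : Prop :=
  ∀ x y : ι → S, x ≠ y → {j | x j ≠ y j}.Finite → F x ≠ F y

def HasRadius {S T : Type*} (F : (ℤ → S) → (ℤ → T)) (r : ℕ) : Prop :=
  ∀ x y i, (∀ t, |t - i| ≤ (r : ℤ) → x t = y t) → F x i = F y i

theorem apply_comp_add_of_commute_shift {S T : Type*} {F : (ℤ → S) → (ℤ → T)}
    (hF : ∀ x, F (fun i => x (i + 1)) = fun i => F x (i + 1)) (m : ℤ) (x : ℤ → S) :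
    F (fun i => x (i + m)) = fun i => F x (i + m) := by
  induction m using Int.induction_on generalizing x with
  | zero => simp
  | succ m ih =>
    have hx : (fun i => x (i + (m + 1))) = fun i => x (i + 1 + m) := by
      funext i; ring_nf
    rw [hx, hF fun i => x (i + m), ih]
    funext i; ring_nf
  | pred m ih =>
    funext i
    have h := congrFun (hF fun i => x (i + (-m - 1))) (i - 1)
    have hx : (fun j => x (j + 1 + (-m - 1))) = fun j => x (j + -m) := by
      funext j; ring_nf
    rw [sub_add_cancel, hx, ih] at h
    rw [← h]; ring_nf

section Shift

variable {S T : Type*} [TopologicalSpace S] [CompactSpace S] [TopologicalSpace T]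
  {F : (ℤ → S) → (ℤ → T)}

theorem Continuous.exists_hasRadius [DiscreteTopology S] [DiscreteTopology T]
    (hcont : Continuous F) (hF : ∀ x, F (fun i => x (i + 1)) = fun i => F x (i + 1)) :
    ∃ r, HasRadius F r := by
  obtain ⟨I, hI⟩ := ((continuous_apply 0).comp hcont).exists_finset_eq_of_eqOn
  refine ⟨I.sup Int.natAbs, fun x y i hxy => ?_⟩
  have key := hI (fun t => x (t + i)) (fun t => y (t + i)) fun t ht => hxy (t + i) <| by
    rw [add_sub_cancel_right t i, Int.abs_eq_natAbs]
    exact_mod_cast Finset.le_sup (f := Int.natAbs) ht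
  simpa only [comp_apply, apply_comp_add_of_commute_shift hF, zero_add] using key

theorem exists_forbidden_word_of_not_surjective [T2Space T] (hcont : Continuous F)
    (hF : ∀ x, F (fun i => x (i + 1)) = fun i => F x (i + 1)) (hns : ¬ Surjective F) :
    ∃ n > 0, ∃ w : Fin n → T, ∀ x i, (fun j : Fin n => F x (i + j)) ≠ w := by
  obtain ⟨z, hz⟩ := not_forall.1 hns
  have hz : (Set.range F)ᶜ ∈ 𝓝 z :=
    (isCompact_range hcont).isClosed.isOpen_compl.mem_nhds fun ⟨x, hx⟩ => hz ⟨x, hx⟩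
  obtain ⟨I, hI⟩ := exists_finset_cylinder_subset_of_mem_nhds hz
  set M := I.sup Int.natAbs
  refine ⟨2 * M + 1, by omega, fun j => z (j - (M : ℤ)), fun x i hxw => ?_⟩
  refine hI (F fun t => x (t + (i + M))) (fun e he => ?_) ⟨_, rfl⟩
  have hM : e.natAbs ≤ M := Finset.le_sup (f := Int.natAbs) he
  have h := congrFun hxw ⟨(e + M).toNat, by omega⟩
  simp only [Int.toNat_of_nonneg (show 0 ≤ e + M by omega), add_sub_cancel_right] at h
  rw [apply_comp_add_of_commute_shift hF, ← h]
  ring_nf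

end Shift

section Counting

variable {S T : Type*} {F : (ℤ → S) → (ℤ → T)} {r : ℕ}

theorem HasRadius.eq_of_eq_off_Ico (hr : HasRadius F r) {x y : ℤ → S} {a b : ℤ}
    (hxy : ∀ t ∉ Set.Ico a b, x t = y t)
    (hF : ∀ i ∈ Set.Ico (a - r) (b + r), F x i = F y i) : F x = F y := by
  funext i
  by_cases hi : i ∈ Set.Ico (a - r) (b + r)
  · exact hF i hi
  · refine hr x y i fun t ht => hxy t fun htab => hi ?_
    simp only [Set.mem_Ico, abs_le] at ht htab ⊢
    omega

theorem exists_fin_mul_add_eq {k n : ℕ} {m : ℤ} (h0 : 0 ≤ m) (hm : m < k * n) :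
    ∃ (b : Fin k) (j : Fin n), (n : ℤ) * b + j = m := by
  lift m to ℕ using h0
  replace hm : m < k * n := by exact_mod_cast hm
  have hn : 0 < n := Nat.pos_of_mul_pos_left (show 0 < k * n by omega)
  refine ⟨⟨m / n, (Nat.div_lt_iff_lt_mul hn).2 hm⟩, ⟨m % n, Nat.mod_lt m hn⟩, ?_⟩
  exact_mod_cast Nat.div_add_mod m n

theorem Preinjective.card_pow_le [Fintype S] [Nonempty S] [Fintype T] (hpre : Preinjective F)
    (hr : HasRadius F r) {n : ℕ} {w : Fin n → T}
    (hw : ∀ x i, (fun j : Fin n => F x (i + j)) ≠ w) {k : ℕ} (hk : 2 * r ≤ k * n) :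
    Fintype.card S ^ (k * n - 2 * r) ≤ (Fintype.card T ^ n - 1) ^ k := by
  classical
  set L := k * n - 2 * r with hL
  have hL' : (L : ℤ) = k * n - 2 * r := by rw [hL, Nat.cast_sub hk]; push_cast; ring
  obtain ⟨s⟩ := ‹Nonempty S›
  let pad : (Fin L → S) → ℤ → S := fun u => extend (fun m : Fin L => (m : ℤ)) u fun _ => s
  have hpad : ∀ u, ∀ t ∉ Set.Ico (0 : ℤ) L, pad u t = s := fun u t ht =>
    extend_apply' _ _ _ fun ⟨m, hm⟩ => ht (by simp [← hm])
  let Ψ : (Fin L → S) → Fin k → {v : Fin n → T // v ≠ w} :=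
    fun u b => ⟨fun j => F (pad u) (n * b - r + j), hw _ _⟩
  have hΨ : Injective Ψ := by
    intro u v huv
    have hF : F (pad u) = F (pad v) := by
      refine hr.eq_of_eq_off_Ico (a := 0) (b := L)
        (fun t ht => (hpad u t ht).trans (hpad v t ht).symm) fun i hi => ?_
      simp only [Set.mem_Ico] at hi
      obtain ⟨b, j, hbj⟩ := exists_fin_mul_add_eq (k := k) (n := n) (m := i + r)
        (by omega) (by omega)
      have h : F (pad u) (n * b - r + j) = F (pad v) (n * b - r + j) :=
        congrArg (fun p => p.1 j) (congrFun huv b)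
      rwa [show (n : ℤ) * b - r + j = i by omega] at h
    by_contra hne
    refine hpre _ _ ((extend_injective (Nat.cast_injective.comp Fin.val_injective) _).ne hne)
      ((Set.finite_Ico 0 (L : ℤ)).subset fun t ht => ?_) hF
    by_contra h
    exact ht ((hpad u t h).trans (hpad v t h).symm)
  simpa [Fintype.card_subtype_compl, Fintype.card_subtype_eq] using
    Fintype.card_le_of_injective Ψ hΨ

end Counting

theorem exists_le_mul_pow_lt_succ_pow (C N a : ℕ) : ∃ k, N ≤ k ∧ C * a ^ k < (a + 1) ^ k := by
  rcases Nat.eq_zero_or_pos a with rfl | ha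
  · exact ⟨N + 1, by omega, by simp⟩
  have ha' : (0 : ℚ) < a := by exact_mod_cast ha
  have hρ : (1 : ℚ) < (a + 1) / a := by rw [one_lt_div ha']; linarith
  obtain ⟨k, hk⟩ := pow_unbounded_of_one_lt (C : ℚ) hρ
  refine ⟨k + N, by omega, ?_⟩
  have h := hk.trans_le (pow_le_pow_right₀ hρ.le (Nat.le_add_right k N))
  rw [div_pow, lt_div_iff₀ (by positivity)] at h
  exact_mod_cast h

/-- Myhill's direction of the Garden of Eden theorem: a non-surjective cellular automaton
on the full shift is not preinjective. -/
theorem stmt_14 {S : Type*} [Fintype S] [TopologicalSpace S] [DiscreteTopology S]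
    (σ : (ℤ → S) → (ℤ → S)) (hσ : ∀ x i, σ x i = x (i + 1))
    (F : (ℤ → S) → (ℤ → S)) (hcont : Continuous F) (hcomm : F ∘ σ = σ ∘ F)
    (hns : ¬ Function.Surjective F) :
    ∃ x y : ℤ → S, x ≠ y ∧ {j : ℤ | x j ≠ y j}.Finite ∧ F x = F y := by
  obtain rfl : σ = fun x i => x (i + 1) := funext fun x => funext (hσ x)
  have hshift : ∀ x, F (fun i => x (i + 1)) = fun i => F x (i + 1) := congrFun hcomm
  by_contra! hpre
  obtain ⟨r, hr⟩ := hcont.exists_hasRadius hshift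
  obtain ⟨n, hn, w, hw⟩ := exists_forbidden_word_of_not_surjective hcont hshift hns
  have : Nonempty S := ⟨w ⟨0, hn⟩⟩
  set q := Fintype.card S
  obtain ⟨k, hk, hlt⟩ := exists_le_mul_pow_lt_succ_pow (q ^ (2 * r)) (2 * r) (q ^ n - 1)
  have hkn : 2 * r ≤ k * n := hk.trans (Nat.le_mul_of_pos_right k hn)
  rw [Nat.sub_add_cancel (Nat.one_le_pow _ _ Fintype.card_pos), ← pow_mul, mul_comm n] at hlt
  have hle : q ^ (k * n) ≤ q ^ (2 * r) * (q ^ n - 1) ^ k := calc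
    q ^ (k * n) = q ^ (2 * r) * q ^ (k * n - 2 * r) := by rw [← pow_add, Nat.add_sub_cancel' hkn]
    _ ≤ q ^ (2 * r) * (q ^ n - 1) ^ k :=
      Nat.mul_le_mul_left _ (Preinjective.card_pow_le hpre hr hw hkn)
  exact (hlt.trans_le hle).false
end

section
/- Every permutation of a finite set X that fixes at least one designated element b, viewed as a bijection of X \ {b}, can be written as a composition of idempotent functions of X: any transposition (2-cycle) of two elements of X \ {b} can be implemented as the composition of three idempotent functions X → X using b as auxiliary storage. -/
/-- A transposition of two elements `a, c ≠ b` of a finite set, viewed on `X \ {b}`, can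
be implemented as a composition of three idempotent functions, using `b` as auxiliary
storage. -/
theorem stmt_16 {X : Type*} [Fintype X] [DecidableEq X] (hcard : 3 ≤ Fintype.card X)
    (b a c : X) (hab : a ≠ b) (hcb : c ≠ b) (hac : a ≠ c) :
    ∃ f₁ f₂ f₃ : X → X,
      (f₁ ∘ f₁ = f₁) ∧ (f₂ ∘ f₂ = f₂) ∧ (f₃ ∘ f₃ = f₃) ∧
      ∀ x : X, x ≠ b → (f₃ ∘ f₂ ∘ f₁) x = Equiv.swap a c x := by
  refine ⟨fun x => if x = a then b else x, fun x => if x = c then a else x,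
    fun x => if x = b then c else x, ?_, ?_, ?_, ?_⟩
  · funext x; simp only [Function.comp]
    split_ifs with h1 h2 <;> simp_all
  · funext x; simp only [Function.comp]
    split_ifs with h1 h2 <;> simp_all [Ne.symm hac]
  · funext x; simp only [Function.comp]
    split_ifs with h1 h2 <;> simp_all [Ne.symm hcb]
  · intro x hx
    simp only [Function.comp]
    rcases eq_or_ne x a with h | hxa
    · rw [h, show (if a = a then b else a) = b from if_pos rfl,
          show (if b = c then a else b) = b from if_neg (Ne.symm hcb),
          show (if b = b then c else b) = c from if_pos rfl, Equiv.swap_apply_left]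
    · rcases eq_or_ne x c with h | hxc
      · rw [h, show (if c = a then b else c) = c from if_neg (Ne.symm hac),
            show (if c = c then a else c) = a from if_pos rfl,
            show (if a = b then c else a) = a from if_neg hab, Equiv.swap_apply_right]
      · rw [show (if x = a then b else x) = x from if_neg hxa,
            show (if x = c then a else x) = x from if_neg hxc,
            show (if x = b then c else x) = x from if_neg hx,
            Equiv.swap_apply_of_ne_of_ne hxa hxc]
end
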